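/- Let N ≥ 2 and m ≥ 1. The extremal stretching factor of φ_{N,m} equals m+1: sup_{w ∈ F_N, w ≠ 1} ‖φ_{N,m}(w)‖_A / ‖w‖_A = m+1. In particular ‖φ_{N,m}(w)‖_A ≤ (m+1)·‖w‖_A for every w ∈ F_N, and the ratio m+1 is attained at w = a_1. -/

import Mathlib

/-
Since `φ` sends every letter to a word of length at most `m + 1`, it stretches
reduced lengths by at most `m + 1`; applying it to a cyclically reduced conjugate of `w`
gives the same bound for cyclic lengths. Conversely `φ a₁ = a₁ a₂^m` has cyclic length
exactly `m + 1`: the homomorphism to `ℤ` counting the letters `a₁, a₂` with sign takes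
the value `m + 1` on it, is invariant under conjugation, and is bounded by word length.
-/

/-- The reduced word length of an element of the free group on `Fin N`,
with respect to the standard free basis. -/
noncomputable def wlen {N : ℕ} (w : FreeGroup (Fin N)) : ℕ := w.toWord.length

/-- The cyclically reduced length of `w`: the minimal word length over the
standard basis among all conjugates of `w`. -/
noncomputable def cyclen {N : ℕ} (w : FreeGroup (Fin N)) : ℕ :=
  sInf (Set.range fun g : FreeGroup (Fin N) => wlen (g * w * g⁻¹))

/-- The extremal stretching factor of a map of the free group on `Fin N`:
the supremum over nontrivial `w` of `‖φ w‖_A / ‖w‖_A`. -/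
noncomputable def LambdaA {N : ℕ} (φ : FreeGroup (Fin N) → FreeGroup (Fin N)) : ℝ :=
  ⨆ w : {w : FreeGroup (Fin N) // w ≠ 1}, (cyclen (φ w.1) : ℝ) / (cyclen w.1 : ℝ)

namespace FreeGroup

variable {α G : Type*} [DecidableEq α] [Group G]

theorem apply_map_le_mul_norm (χ : FreeGroup α →* G) (μ : G → ℕ) (hμ_one : μ 1 = 0)
    (hμ_mul : ∀ a b, μ (a * b) ≤ μ a + μ b) (hμ_inv : ∀ a, μ a⁻¹ = μ a) {c : ℕ}
    (hc : ∀ x, μ (χ (of x)) ≤ c) (w : FreeGroup α) : μ (χ w) ≤ c * w.norm := by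
  suffices h : ∀ L : List (α × Bool), μ (χ (mk L)) ≤ c * L.length by
    have hw := h w.toWord
    rwa [mk_toWord] at hw
  intro L
  induction L with
  | nil => simp [← one_eq_mk, hμ_one]
  | cons p L ih =>
    obtain ⟨x, b⟩ := p
    have hletter : μ (χ (mk [(x, b)])) ≤ c := by
      cases b
      · have : mk [(x, false)] = (of x)⁻¹ := by rw [of, inv_mk]; rfl
        rw [this, _root_.map_inv, hμ_inv]
        exact hc x
      · exact hc x
    calc μ (χ (mk ((x, b) :: L))) = μ (χ (mk [(x, b)]) * χ (mk L)) := by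
          rw [← _root_.map_mul, mul_mk]; rfl
      _ ≤ c + c * L.length := (hμ_mul _ _).trans (Nat.add_le_add hletter ih)
      _ = c * ((x, b) :: L).length := by simp only [List.length_cons]; ring

end FreeGroup

section CyclicLength

variable {N : ℕ}

theorem wlen_eq_norm (w : FreeGroup (Fin N)) : wlen w = w.norm := rfl

theorem cyclen_le_wlen (w : FreeGroup (Fin N)) : cyclen w ≤ wlen w :=
  (Nat.sInf_le ⟨1, rfl⟩ : cyclen w ≤ wlen (1 * w * 1⁻¹)).trans_eq (by simp)

theorem exists_wlen_conj_eq_cyclen (w : FreeGroup (Fin N)) :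
    ∃ g : FreeGroup (Fin N), wlen (g * w * g⁻¹) = cyclen w :=
  Nat.sInf_mem (Set.range_nonempty _)

theorem le_cyclen {n : ℕ} {w : FreeGroup (Fin N)} (h : ∀ g, n ≤ wlen (g * w * g⁻¹)) :
    n ≤ cyclen w :=
  le_csInf (Set.range_nonempty _) (Set.forall_mem_range.mpr h)

theorem cyclen_pos {w : FreeGroup (Fin N)} (hw : w ≠ 1) : 0 < cyclen w := by
  obtain ⟨g, hg⟩ := exists_wlen_conj_eq_cyclen w
  rw [← hg, wlen_eq_norm, Nat.pos_iff_ne_zero, Ne, FreeGroup.norm_eq_zero,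
    conj_eq_one_iff]
  exact hw

theorem cyclen_map_le (φ : FreeGroup (Fin N) →* FreeGroup (Fin N)) {c : ℕ}
    (hc : ∀ i, wlen (φ (FreeGroup.of i)) ≤ c) (w : FreeGroup (Fin N)) :
    cyclen (φ w) ≤ c * cyclen w := by
  obtain ⟨g, hg⟩ := exists_wlen_conj_eq_cyclen w
  calc cyclen (φ w) ≤ wlen (φ g * φ w * (φ g)⁻¹) := Nat.sInf_le ⟨φ g, rfl⟩
    _ = wlen (φ (g * w * g⁻¹)) := by rw [map_mul, map_mul, map_inv]
    _ ≤ c * wlen (g * w * g⁻¹) :=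
      FreeGroup.apply_map_le_mul_norm φ wlen FreeGroup.norm_one FreeGroup.norm_mul_le
        (fun _ => FreeGroup.norm_inv_eq) hc _
    _ = c * cyclen w := by rw [hg]

theorem natAbs_le_cyclen (χ : FreeGroup (Fin N) →* Multiplicative ℤ)
    (hχ : ∀ i, (χ (FreeGroup.of i)).toAdd.natAbs ≤ 1) (w : FreeGroup (Fin N)) :
    (χ w).toAdd.natAbs ≤ cyclen w := by
  refine le_cyclen fun g => ?_
  have hconj : χ (g * w * g⁻¹) = χ w := by
    rw [map_mul, map_mul, map_inv, mul_comm (χ g), mul_inv_cancel_right]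
  simpa [hconj, wlen_eq_norm] using
    FreeGroup.apply_map_le_mul_norm χ (fun z => z.toAdd.natAbs) rfl
      (fun a b => Int.natAbs_add_le a.toAdd b.toAdd) (fun a => Int.natAbs_neg a.toAdd) hχ
      (g * w * g⁻¹)

theorem cyclen_of (i : Fin N) : cyclen (FreeGroup.of i) = 1 :=
  le_antisymm (cyclen_le_wlen _ |>.trans (FreeGroup.norm_of i).le)
    (cyclen_pos (FreeGroup.of_ne_one i))

theorem wlen_of_mul_of_pow_le (i j : Fin N) (m : ℕ) :
    wlen (FreeGroup.of i * FreeGroup.of j ^ m) ≤ m + 1 := by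
  simpa [wlen_eq_norm, FreeGroup.norm_of, FreeGroup.norm_of_pow, add_comm] using
    FreeGroup.norm_mul_le (FreeGroup.of i) (FreeGroup.of j ^ m)

theorem cyclen_of_mul_of_pow (i j : Fin N) (m : ℕ) :
    cyclen (FreeGroup.of i * FreeGroup.of j ^ m) = m + 1 := by
  refine le_antisymm ((cyclen_le_wlen _).trans (wlen_of_mul_of_pow_le i j m)) ?_
  let χ : FreeGroup (Fin N) →* Multiplicative ℤ :=
    FreeGroup.lift fun k => Multiplicative.ofAdd (if k = i ∨ k = j then 1 else 0)
  have hχ : ∀ k, (χ (FreeGroup.of k)).toAdd.natAbs ≤ 1 := by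
    intro k
    simp only [χ, FreeGroup.lift_apply_of, toAdd_ofAdd]
    split_ifs <;> simp
  have hcount := natAbs_le_cyclen χ hχ (FreeGroup.of i * FreeGroup.of j ^ m)
  simp only [χ, map_mul, map_pow, FreeGroup.lift_apply_of, toAdd_mul, toAdd_pow, toAdd_ofAdd,
    true_or, or_true, if_true, nsmul_eq_mul, mul_one] at hcount
  omega

end CyclicLength

theorem LambdaA_eq_of_cyclen_le {N C : ℕ} (f : FreeGroup (Fin N) → FreeGroup (Fin N))
    (hle : ∀ w, cyclen (f w) ≤ C * cyclen w) {w₀ : FreeGroup (Fin N)} (hw₀ : w₀ ≠ 1)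
    (heq : (cyclen (f w₀) : ℝ) / cyclen w₀ = C) : LambdaA f = C := by
  have hbound : ∀ w : {w : FreeGroup (Fin N) // w ≠ 1},
      (cyclen (f w.1) : ℝ) / cyclen w.1 ≤ C := by
    rintro ⟨w, hw⟩
    rw [div_le_iff₀ (by exact_mod_cast cyclen_pos hw)]
    exact_mod_cast hle w
  have : Nonempty {w : FreeGroup (Fin N) // w ≠ 1} := ⟨⟨w₀, hw₀⟩⟩
  refine le_antisymm (ciSup_le hbound) ?_
  rw [← heq]
  exact le_ciSup (f := fun w : {w : FreeGroup (Fin N) // w ≠ 1} =>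
    (cyclen (f w.1) : ℝ) / cyclen w.1) ⟨C, Set.forall_mem_range.mpr hbound⟩ ⟨w₀, hw₀⟩

/-- for `φ = φ_{N,m}` (given by `a₁ ↦ a₁ a₂^m`, `aᵢ ↦ aᵢ` for `i ≥ 2`),
the extremal stretching factor equals `m + 1`; in particular
`‖φ w‖_A ≤ (m+1)‖w‖_A` for all `w`, and the ratio `m+1` is attained at `a₁`. -/
theorem stmt0 (N m : ℕ) (hN : 2 ≤ N)
    (φ : FreeGroup (Fin N) →* FreeGroup (Fin N))
    (hφ1 : φ (FreeGroup.of ⟨0, by omega⟩) =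
      FreeGroup.of ⟨0, by omega⟩ * FreeGroup.of ⟨1, by omega⟩ ^ m)
    (hφ2 : ∀ i : Fin N, i ≠ ⟨0, by omega⟩ → φ (FreeGroup.of i) = FreeGroup.of i) :
    LambdaA (fun w => φ w) = m + 1 ∧
    (∀ w : FreeGroup (Fin N), cyclen (φ w) ≤ (m + 1) * cyclen w) ∧
    (cyclen (φ (FreeGroup.of ⟨0, by omega⟩)) : ℝ) /
      (cyclen (FreeGroup.of (⟨0, by omega⟩ : Fin N)) : ℝ) = m + 1 := by
  have hletter : ∀ i, wlen (φ (FreeGroup.of i)) ≤ m + 1 := by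
    intro i
    by_cases hi : i = ⟨0, by omega⟩
    · subst hi
      rw [hφ1]
      exact wlen_of_mul_of_pow_le _ _ m
    · rw [hφ2 i hi, wlen_eq_norm, FreeGroup.norm_of]
      omega
  have hupper := cyclen_map_le φ hletter
  have hratio : (cyclen (φ (FreeGroup.of ⟨0, by omega⟩)) : ℝ) /
      (cyclen (FreeGroup.of (⟨0, by omega⟩ : Fin N)) : ℝ) = m + 1 := by
    rw [hφ1, cyclen_of_mul_of_pow, cyclen_of]
    push_cast
    ring
  refine ⟨?_, hupper, hratio⟩
  exact_mod_cast LambdaA_eq_of_cyclen_le _ hupper (FreeGroup.of_ne_one _) (by exact_mod_cast hratio)
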